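/- arXiv:1003.1129 — 3 statements merged into one kernel-verified Lean document; each statement's English description precedes it below -/
import Mathlib

section
/- For p ≥ 2 and E_∞ = 2√((p-1)/p), the function Θ_p defined by Θ_p(u) = (1/2)log(p-1) - ((p-2)/(4(p-1)))u² - I₁(u) for u ≤ -E_∞, Θ_p(u) = (1/2)log(p-1) - ((p-2)/(4(p-1)))u² for -E_∞ ≤ u ≤ 0, and Θ_p(u) = (1/2)log(p-1) for u ≥ 0, is continuous, non-decreasing on ℝ, and its supremum equals (1/2)log(p-1). -/
open Real Set

noncomputable def Einf (p : ℕ) : ℝ := 2 * Real.sqrt ((p - 1) / p)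

noncomputable def rateI1 (p : ℕ) (u : ℝ) : ℝ :=
  -(u / (Einf p) ^ 2) * Real.sqrt (u ^ 2 - (Einf p) ^ 2)
    - Real.log (-u + Real.sqrt (u ^ 2 - (Einf p) ^ 2)) + Real.log (Einf p)

/-- The complexity function `Θ_p`. -/
noncomputable def Theta (p : ℕ) (u : ℝ) : ℝ :=
  if u ≤ -(Einf p) then
    (1 / 2) * Real.log (p - 1) - ((p - 2) / (4 * (p - 1))) * u ^ 2 - rateI1 p u
  else if u ≤ 0 then
    (1 / 2) * Real.log (p - 1) - ((p - 2) / (4 * (p - 1))) * u ^ 2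
  else (1 / 2) * Real.log (p - 1)

lemma Einf_pos (p : ℕ) (hp : 2 ≤ p) : 0 < Einf p := by
  have hp2 : (2:ℝ) ≤ (p:ℝ) := by exact_mod_cast hp
  have h : (0:ℝ) < ((p:ℝ) - 1) / p := by
    apply div_pos <;> linarith
  have := Real.sqrt_pos.mpr h
  unfold Einf
  linarith

lemma rateI1_at_edge (p : ℕ) : rateI1 p (-(Einf p)) = 0 := by
  unfold rateI1
  have h : (-(Einf p)) ^ 2 - (Einf p) ^ 2 = 0 := by ring
  rw [h, Real.sqrt_zero]
  simp

lemma Theta_eq (p : ℕ) (hp : 2 ≤ p) (u : ℝ) :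
    Theta p u = (1 / 2) * Real.log ((p:ℝ) - 1)
      - (((p:ℝ) - 2) / (4 * ((p:ℝ) - 1))) * (min u 0) ^ 2
      - rateI1 p (min u (-(Einf p))) := by
  have hE : 0 < Einf p := Einf_pos p hp
  unfold Theta
  by_cases h1 : u ≤ -(Einf p)
  · have hu0 : u ≤ 0 := le_trans h1 (by linarith)
    rw [if_pos h1, min_eq_left hu0, min_eq_left h1]
  · rw [if_neg h1]
    have h1' : -(Einf p) ≤ u := le_of_not_ge h1
    rw [min_eq_right h1', rateI1_at_edge]
    by_cases h2 : u ≤ 0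
    · rw [if_pos h2, min_eq_left h2]; ring
    · rw [if_neg h2, min_eq_right (le_of_not_ge h2)]; ring

lemma rateI1_contOn (p : ℕ) (hp : 2 ≤ p) :
    ContinuousOn (rateI1 p) (Iic (-(Einf p))) := by
  have hE : 0 < Einf p := Einf_pos p hp
  unfold rateI1
  apply ContinuousOn.add
  · apply ContinuousOn.sub
    · exact (Continuous.continuousOn (by continuity))
    · apply ContinuousOn.log
      · exact (Continuous.continuousOn (by continuity))
      · intro x hx
        have hx' : x ≤ -(Einf p) := hx
        have : 0 ≤ Real.sqrt (x ^ 2 - (Einf p) ^ 2) := Real.sqrt_nonneg _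
        nlinarith
  · exact continuousOn_const

lemma rateI1_hasDeriv (p : ℕ) (hp : 2 ≤ p) (u : ℝ) (hu : u < -(Einf p)) :
    HasDerivAt (rateI1 p) (-(2 / (Einf p) ^ 2) * Real.sqrt (u ^ 2 - (Einf p) ^ 2)) u := by
  have hE : 0 < Einf p := Einf_pos p hp
  set E := Einf p with hEdef
  have hq : 0 < u ^ 2 - E ^ 2 := by nlinarith
  set s := Real.sqrt (u ^ 2 - E ^ 2) with hsdef
  have hs_pos : 0 < s := Real.sqrt_pos.mpr hq
  have hs_sq : s ^ 2 = u ^ 2 - E ^ 2 := Real.sq_sqrt hq.le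
  have hinner : HasDerivAt (fun x : ℝ => x ^ 2 - E ^ 2) (2 * u) u := by
    simpa using (hasDerivAt_pow 2 u).sub_const (E ^ 2)
  have hsqrt : HasDerivAt (fun x : ℝ => Real.sqrt (x ^ 2 - E ^ 2)) (u / s) u := by
    have := (Real.hasDerivAt_sqrt (ne_of_gt hq)).comp u hinner
    refine this.congr_deriv ?_
    rw [← hsdef, div_mul_eq_mul_div, one_mul, mul_div_mul_left _ _ two_ne_zero]
  have harg : 0 < -u + s := by nlinarith
  have h1 : HasDerivAt (fun x : ℝ => -(x / E ^ 2) * Real.sqrt (x ^ 2 - E ^ 2))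
      (-(1 / E ^ 2) * s + -(u / E ^ 2) * (u / s)) u := by
    have ha : HasDerivAt (fun x : ℝ => -(x / E ^ 2)) (-(1 / E ^ 2)) u := by
      exact ((hasDerivAt_id' u).div_const (E ^ 2)).neg
    exact ha.mul hsqrt
  have h2 : HasDerivAt (fun x : ℝ => Real.log (-x + Real.sqrt (x ^ 2 - E ^ 2)))
      ((-1 + u / s) / (-u + s)) u := by
    have hin : HasDerivAt (fun x : ℝ => -x + Real.sqrt (x ^ 2 - E ^ 2)) (-1 + u / s) u :=
      (hasDerivAt_id u).neg.add hsqrt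
    exact hin.log (ne_of_gt harg)
  have h3 := (h1.sub h2).add_const (Real.log E)
  refine h3.congr_deriv ?_
  symm
  have hE2 : (E:ℝ) ^ 2 ≠ 0 := by positivity
  have key : (-1 + u / s) / (-u + s) = -1 / s := by
    rw [div_eq_div_iff (ne_of_gt harg) (ne_of_gt hs_pos)]
    field_simp
    ring
  rw [key]
  field_simp
  linear_combination (-1) * hs_sq

theorem stmt1 (p : ℕ) (hp : 2 ≤ p) :
    Continuous (Theta p) ∧ Monotone (Theta p) ∧
    sSup (Set.range (Theta p)) = (1 / 2) * Real.log (p - 1) := by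
  have hE : 0 < Einf p := Einf_pos p hp
  have hp2 : (2:ℝ) ≤ (p:ℝ) := by exact_mod_cast hp
  have ha : 0 ≤ ((p:ℝ) - 2) / (4 * ((p:ℝ) - 1)) := by
    apply div_nonneg <;> linarith
  set a := ((p:ℝ) - 2) / (4 * ((p:ℝ) - 1)) with hadef
  set C := (1 / 2) * Real.log ((p:ℝ) - 1) with hCdef
  have hrw : ∀ u, Theta p u = C - a * (min u 0) ^ 2 - rateI1 p (min u (-(Einf p))) :=
    Theta_eq p hp
  -- antitone of rateI1 on Iic(-E)
  have hanti : AntitoneOn (rateI1 p) (Iic (-(Einf p))) := by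
    apply antitoneOn_of_deriv_nonpos (convex_Iic _) (rateI1_contOn p hp)
    · intro x hx
      rw [interior_Iic] at hx
      exact (rateI1_hasDeriv p hp x hx).differentiableAt.differentiableWithinAt
    · intro x hx
      rw [interior_Iic] at hx
      rw [(rateI1_hasDeriv p hp x hx).deriv]
      have h1 : 0 ≤ Real.sqrt (x ^ 2 - (Einf p) ^ 2) := Real.sqrt_nonneg _
      have h2 : (0:ℝ) < 2 / (Einf p) ^ 2 := by positivity
      nlinarith
  have hmono : Monotone (Theta p) := by
    intro u v huv
    rw [hrw u, hrw v]
    have h1 : min u 0 ≤ min v 0 := min_le_min huv le_rfl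
    have h2 : min v 0 ≤ 0 := min_le_right _ _
    have hsq : (min v 0) ^ 2 ≤ (min u 0) ^ 2 := by nlinarith
    have hmm : a * (min v 0) ^ 2 ≤ a * (min u 0) ^ 2 :=
      mul_le_mul_of_nonneg_left hsq ha
    have hr : rateI1 p (min v (-(Einf p))) ≤ rateI1 p (min u (-(Einf p))) :=
      hanti (mem_Iic.mpr (min_le_right _ _)) (mem_Iic.mpr (min_le_right _ _)) (min_le_min huv le_rfl)
    linarith
  refine ⟨?_, hmono, ?_⟩
  · have : Continuous (fun u => C - a * (min u 0) ^ 2 - rateI1 p (min u (-(Einf p)))) := by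
      apply Continuous.sub
      · apply Continuous.sub continuous_const
        exact (continuous_const.mul (((continuous_id.min continuous_const).pow 2)))
      · exact (rateI1_contOn p hp).comp_continuous
          (continuous_id.min continuous_const) (fun x => mem_Iic.mpr (min_le_right _ _))
    exact this.congr (fun u => (hrw u).symm)
  · have hval : ∀ v : ℝ, (1:ℝ) ≤ v → Theta p v = C := by
      intro v hv
      unfold Theta
      rw [if_neg (by linarith), if_neg (by linarith)]
    apply IsGreatest.csSup_eq
    constructor
    · exact ⟨1, hval 1 le_rfl⟩
    · rintro y ⟨u, rfl⟩
      calc Theta p u ≤ Theta p (max u 1) := hmono (le_max_left _ _)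
        _ = C := hval _ (le_max_right _ _)
end

section
/- For an integer p ≥ 3, the function g_p(a) = (a-1)² + p(a-1) - p·a·log a on [1,∞) satisfies g_p(1) = 0, g_p'(1) = 0, g_p''(1) = 2 - p < 0, g_p'' is increasing on [1,∞), and g_p(p-1) < 0; consequently g_p has a unique zero a* in (1,∞), and a* > p - 1. -/
open Real Set

/-- The auxiliary function `g_p(a) = (a-1)² + p(a-1) - p·a·log a`. -/
noncomputable def gAux (p : ℕ) (a : ℝ) : ℝ :=
  (a - 1) ^ 2 + p * (a - 1) - p * a * Real.log a

noncomputable def g1Aux (p : ℕ) (a : ℝ) : ℝ := 2 * (a - 1) - p * Real.log a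

lemma gAux_hasDerivAt (p : ℕ) {a : ℝ} (ha : 0 < a) :
    HasDerivAt (gAux p) (g1Aux p a) a := by
  have hlog := Real.hasDerivAt_log ha.ne'
  have h1 : HasDerivAt (fun a : ℝ => (a - 1) ^ 2 + p * (a - 1))
      (2 * (a - 1) + p) a := by
    have h2 := ((hasDerivAt_id a).sub_const 1).pow 2
    have h3 := ((hasDerivAt_id a).sub_const 1).const_mul (p : ℝ)
    refine (h2.add h3).congr_deriv ?_
    simp only [id_eq]; ring
  have h4 : HasDerivAt (fun a : ℝ => p * a * Real.log a)
      ((p : ℝ) * Real.log a + p * a * a⁻¹) a := by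
    have := (((hasDerivAt_id a).const_mul (p : ℝ)).mul hlog)
    refine this.congr_deriv ?_
    simp only [id_eq]; ring
  have := h1.sub h4
  refine this.congr_deriv ?_
  unfold g1Aux
  field_simp
  ring

lemma g1Aux_hasDerivAt (p : ℕ) {a : ℝ} (ha : 0 < a) :
    HasDerivAt (g1Aux p) (2 - p * a⁻¹) a := by
  have hlog := Real.hasDerivAt_log ha.ne'
  have h1 : HasDerivAt (fun a : ℝ => 2 * (a - 1)) 2 a := by
    have := ((hasDerivAt_id a).sub_const 1).const_mul (2 : ℝ)
    refine this.congr_deriv ?_; ring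
  have h2 := hlog.const_mul (p : ℝ)
  exact h1.sub h2

lemma deriv_gAux (p : ℕ) {a : ℝ} (ha : 0 < a) : deriv (gAux p) a = g1Aux p a :=
  (gAux_hasDerivAt p ha).deriv

lemma deriv2_gAux (p : ℕ) {a : ℝ} (ha : 0 < a) :
    deriv (deriv (gAux p)) a = 2 - p * a⁻¹ := by
  have hev : deriv (gAux p) =ᶠ[nhds a] g1Aux p := by
    filter_upwards [isOpen_Ioi.eventually_mem (show a ∈ Ioi (0:ℝ) from ha)] with b hb
    exact deriv_gAux p hb
  rw [hev.deriv_eq]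
  exact (g1Aux_hasDerivAt p ha).deriv

lemma pade {x : ℝ} (hx : 1 < x) : 2 * (x - 1) < (x + 1) * Real.log x := by
  set f : ℝ → ℝ := fun y => Real.log y - (2 * y - 2) / (y + 1) with hf
  have hd : ∀ y : ℝ, 0 < y → HasDerivAt f (y⁻¹ - 4 / (y + 1) ^ 2) y := by
    intro y hy
    have hy1 : y + 1 ≠ 0 := by positivity
    have h1 : HasDerivAt (fun y : ℝ => 2 * y - 2) 2 y := by
      have := ((hasDerivAt_id y).const_mul (2:ℝ)).sub_const 2
      refine this.congr_deriv ?_; ring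
    have h2 : HasDerivAt (fun y : ℝ => y + 1) 1 y := (hasDerivAt_id y).add_const 1
    have h3 := h1.div h2 hy1
    have := (Real.hasDerivAt_log hy.ne').sub h3
    refine this.congr_deriv ?_
    field_simp
    ring
  have hmono : StrictMonoOn f (Ici (1:ℝ)) := by
    apply strictMonoOn_of_deriv_pos (convex_Ici 1)
    · intro y hy
      exact ((hd y (lt_of_lt_of_le one_pos hy)).continuousAt).continuousWithinAt
    · intro y hy
      rw [interior_Ici] at hy
      have hy0 : (0:ℝ) < y := lt_trans one_pos hy
      rw [(hd y hy0).deriv]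
      have h1 : (0:ℝ) < y * (y + 1) ^ 2 := by positivity
      rw [sub_pos, div_lt_iff₀ (by positivity : (0:ℝ) < (y+1)^2), inv_mul_eq_div,
        lt_div_iff₀ hy0]
      have h5 : (1:ℝ) < y := hy
      nlinarith [mul_pos (sub_pos.2 h5) (sub_pos.2 h5)]
  have := hmono Set.self_mem_Ici (Set.mem_Ici.2 hx.le) hx
  simp only [hf, Real.log_one] at this
  have hx1 : (0:ℝ) < x + 1 := by linarith
  have h2 : 0 < Real.log x - (2 * x - 2) / (x + 1) := by
    have : (0:ℝ) - (2 * 1 - 2) / (1 + 1) = 0 := by norm_num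
    linarith [hmono Set.self_mem_Ici (Set.mem_Ici.2 hx.le) hx, this]
  rw [sub_pos, div_lt_iff₀ hx1] at h2
  nlinarith

theorem stmt6 (p : ℕ) (hp : 3 ≤ p) :
    gAux p 1 = 0 ∧
    deriv (gAux p) 1 = 0 ∧
    deriv (deriv (gAux p)) 1 = 2 - p ∧
    (2 - (p : ℝ) < 0) ∧
    MonotoneOn (deriv (deriv (gAux p))) (Set.Ici 1) ∧
    gAux p ((p : ℝ) - 1) < 0 ∧
    (∃! a : ℝ, a ∈ Set.Ioi (1 : ℝ) ∧ gAux p a = 0) ∧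
    (∀ a : ℝ, a ∈ Set.Ioi (1 : ℝ) → gAux p a = 0 → (p : ℝ) - 1 < a) := by
  have hP : (3:ℝ) ≤ (p:ℝ) := by exact_mod_cast hp
  set P : ℝ := (p:ℝ) with hPdef
  have hP0 : (0:ℝ) < P := by linarith
  -- simple values
  have hg1_one : g1Aux p 1 = 0 := by simp [g1Aux]
  have hg_one : gAux p 1 = 0 := by simp [gAux]
  -- monotonicity pieces of g1
  have hcontg1 : ∀ y ∈ Ici (1:ℝ), ContinuousWithinAt (g1Aux p) (Ici 1) y :=
    fun y hy => ((g1Aux_hasDerivAt p (lt_of_lt_of_le one_pos hy)).continuousAt).continuousWithinAt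
  have hg1_anti : StrictAntiOn (g1Aux p) (Icc 1 (P/2)) := by
    apply strictAntiOn_of_deriv_neg (convex_Icc 1 (P/2))
    · exact fun y hy => ((g1Aux_hasDerivAt p (lt_of_lt_of_le one_pos hy.1)).continuousAt).continuousWithinAt
    · intro y hy
      rw [interior_Icc] at hy
      have hy0 : (0:ℝ) < y := lt_trans one_pos hy.1
      rw [(g1Aux_hasDerivAt p hy0).deriv]
      have : 2 * y < P := by linarith [hy.2]
      rw [sub_neg, ← div_eq_mul_inv, lt_div_iff₀ hy0]
      linarith
  have hg1_mono : StrictMonoOn (g1Aux p) (Ici (P/2)) := by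
    apply strictMonoOn_of_deriv_pos (convex_Ici (P/2))
    · exact fun y hy => ((g1Aux_hasDerivAt p (by simp only [mem_Ici] at hy; linarith)).continuousAt).continuousWithinAt
    · intro y hy
      rw [interior_Ici, mem_Ioi] at hy
      have hy0 : (0:ℝ) < y := by linarith
      rw [(g1Aux_hasDerivAt p hy0).deriv, sub_pos, ← div_eq_mul_inv, div_lt_iff₀ hy0]
      linarith
  have hhalf1 : (1:ℝ) < P/2 := by linarith
  have hg1_half : g1Aux p (P/2) < 0 := by
    have := hg1_anti (show (1:ℝ) ∈ Icc 1 (P/2) from ⟨le_refl 1, hhalf1.le⟩)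
      (show P/2 ∈ Icc 1 (P/2) from ⟨hhalf1.le, le_refl _⟩) hhalf1
    rwa [hg1_one] at this
  have hg1_Psq : 0 < g1Aux p (P^2) := by
    unfold g1Aux
    have hlg : Real.log (P^2) = 2 * Real.log P := by
      rw [Real.log_pow]; push_cast; ring
    have hlb : Real.log P ≤ P - 1 := Real.log_le_sub_one_of_pos hP0
    rw [hlg]
    nlinarith
  have hle : P/2 ≤ P^2 := by nlinarith
  obtain ⟨c, hcmem, hc⟩ := intermediate_value_Icc hle
    (fun y hy => ((g1Aux_hasDerivAt p (by
      simp only [mem_Icc] at hy; linarith [hy.1])).continuousAt).continuousWithinAt)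
    (show (0:ℝ) ∈ Icc (g1Aux p (P/2)) (g1Aux p (P^2)) from ⟨hg1_half.le, hg1_Psq.le⟩)
  have hc_gt : P/2 < c := by
    rcases lt_or_eq_of_le hcmem.1 with h | h
    · exact h
    · exfalso; rw [← h] at hc; linarith [hg1_half, hc.symm ▸ hg1_half]
  have hc1 : (1:ℝ) < c := lt_trans hhalf1 hc_gt
  have hc0 : (0:ℝ) < c := lt_trans one_pos hc1
  have hc_lt : c < P^2 := by
    rcases lt_or_eq_of_le hcmem.2 with h | h
    · exact h
    · exfalso; rw [h] at hc; linarith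
  have hneg : ∀ a : ℝ, 1 < a → a < c → g1Aux p a < 0 := by
    intro a ha1 hac
    by_cases h : a ≤ P/2
    · have := hg1_anti (show (1:ℝ) ∈ Icc 1 (P/2) from ⟨le_refl 1, hhalf1.le⟩)
        (show a ∈ Icc 1 (P/2) from ⟨ha1.le, h⟩) ha1
      rwa [hg1_one] at this
    · push_neg at h
      have := hg1_mono (show a ∈ Ici (P/2) from h.le)
        (show c ∈ Ici (P/2) from hc_gt.le) hac
      rwa [hc] at this
  have hpos : ∀ a : ℝ, c < a → 0 < g1Aux p a := by
    intro a hca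
    have := hg1_mono (show c ∈ Ici (P/2) from hc_gt.le)
      (show a ∈ Ici (P/2) from by simp only [mem_Ici]; linarith) hca
    rwa [hc] at this
  have hganti : StrictAntiOn (gAux p) (Icc 1 c) := by
    apply strictAntiOn_of_deriv_neg (convex_Icc 1 c)
    · exact fun y hy => ((gAux_hasDerivAt p (by
        simp only [mem_Icc] at hy; linarith [hy.1])).continuousAt).continuousWithinAt
    · intro y hy
      rw [interior_Icc] at hy
      rw [deriv_gAux p (lt_trans one_pos hy.1)]
      exact hneg y hy.1 hy.2
  have hgmono : StrictMonoOn (gAux p) (Ici c) := by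
    apply strictMonoOn_of_deriv_pos (convex_Ici c)
    · exact fun y hy => ((gAux_hasDerivAt p (by
        simp only [mem_Ici] at hy; linarith)).continuousAt).continuousWithinAt
    · intro y hy
      rw [interior_Ici, mem_Ioi] at hy
      rw [deriv_gAux p (by linarith)]
      exact hpos y hy
  have hgc : gAux p c < 0 := by
    have := hganti (show (1:ℝ) ∈ Icc 1 c from ⟨le_refl 1, hc1.le⟩)
      (show c ∈ Icc 1 c from ⟨hc1.le, le_refl c⟩) hc1
    rwa [hg_one] at this
  have hgb : 0 < gAux p (16 * P^2) := by
    unfold gAux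
    have h16 : Real.log (16 * P^2) = Real.log 16 + 2 * Real.log P := by
      rw [Real.log_mul (by norm_num) (by positivity), Real.log_pow]
      push_cast; ring
    have hlb : Real.log P ≤ P - 1 := Real.log_le_sub_one_of_pos hP0
    have hl16 : Real.log 16 ≤ 15 := by
      have := Real.log_le_sub_one_of_pos (show (0:ℝ) < 16 by norm_num)
      linarith
    rw [h16]
    nlinarith [sq_nonneg P, mul_pos hP0 hP0, mul_pos (mul_pos hP0 hP0) hP0,
      mul_pos (mul_pos (mul_pos hP0 hP0) hP0) hP0]
  have hcb : c < 16 * P^2 := by nlinarith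
  obtain ⟨astar, hamem, ha⟩ := intermediate_value_Icc hcb.le
    (fun y hy => ((gAux_hasDerivAt p (by
      simp only [mem_Icc] at hy; linarith [hy.1])).continuousAt).continuousWithinAt)
    (show (0:ℝ) ∈ Icc (gAux p c) (gAux p (16 * P^2)) from ⟨hgc.le, hgb.le⟩)
  have hastar_gt : c < astar := by
    rcases lt_or_eq_of_le hamem.1 with h | h
    · exact h
    · exfalso; rw [← h] at ha; linarith
  have hastar1 : (1:ℝ) < astar := lt_trans hc1 hastar_gt
  have hzero_gt : ∀ a : ℝ, 1 < a → gAux p a = 0 → c < a := by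
    intro a ha1 ha0
    by_contra h
    push_neg at h
    have := hganti (show (1:ℝ) ∈ Icc 1 c from ⟨le_refl 1, hc1.le⟩)
      (show a ∈ Icc 1 c from ⟨ha1.le, h⟩) ha1
    rw [hg_one, ha0] at this
    linarith
  have hgP1 : gAux p (P - 1) < 0 := by
    have hpde := pade (show (1:ℝ) < P - 1 by linarith)
    unfold gAux
    have hP1 : (0:ℝ) < P - 1 := by linarith
    nlinarith [mul_lt_mul_of_pos_left hpde hP1]
  refine ⟨hg_one, ?_, ?_, by linarith, ?_, hgP1, ?_, ?_⟩
  · rw [deriv_gAux p one_pos, hg1_one]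
  · rw [deriv2_gAux p one_pos]; norm_num; rfl
  · intro x hx y hy hxy
    simp only [mem_Ici] at hx hy
    have hx0 : (0:ℝ) < x := lt_of_lt_of_le one_pos hx
    have hy0 : (0:ℝ) < y := lt_of_lt_of_le one_pos hy
    rw [deriv2_gAux p hx0, deriv2_gAux p hy0]
    have hinv : y⁻¹ ≤ x⁻¹ := inv_anti₀ hx0 hxy
    have := mul_le_mul_of_nonneg_left hinv hP0.le
    linarith
  · refine ⟨astar, ⟨mem_Ioi.2 hastar1, ha⟩, ?_⟩
    rintro a ⟨ha1, ha0⟩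
    rw [mem_Ioi] at ha1
    have hca : c < a := hzero_gt a ha1 ha0
    exact hgmono.injOn (mem_Ici.2 hca.le) (mem_Ici.2 hastar_gt.le) (by rw [ha0, ha])
  · intro a ha1 ha0
    rw [mem_Ioi] at ha1
    have hca : c < a := hzero_gt a ha1 ha0
    by_contra h
    push_neg at h
    have hmem1 : a ∈ Ici c := mem_Ici.2 hca.le
    have hmem2 : P - 1 ∈ Ici c := mem_Ici.2 (by linarith)
    have := hgmono.monotoneOn hmem1 hmem2 h
    rw [ha0] at this
    linarith
end

section
/- Let p ≥ 3, β > 0, and E_∞ = 2√((p-1)/p). For h < -E_∞, the two conditions (i) 0 < (1/(√2·β(p-1)))·(-h ± √(h² - E_∞²)) < (2/p)·((p-2)/p)^{(p-2)/2} for at least one choice of sign, are equivalent to h < u*(β) where u*(β) = sup{v ≤ -E_∞ : β(v) < β} and β(v) = (p/(2^{3/2}(p-1)))·(p/(p-2))^{(p-2)/2}·(-v - √(v² - E_∞²)). Moreover β(·) is strictly increasing on (-∞, -E_∞] with lim_{v→-∞} β(v) = 0. -/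
open Real Set Filter

/-- The function `β(v)` of the TAP analysis. -/
noncomputable def betaFn (p : ℕ) (v : ℝ) : ℝ :=
  ((p : ℝ) / ((2 : ℝ) ^ ((3 : ℝ) / 2) * ((p : ℝ) - 1)))
    * (((p : ℝ) / ((p : ℝ) - 2)) ^ (((p : ℝ) - 2) / 2))
    * (-v - Real.sqrt (v ^ 2 - (Einf p) ^ 2))

/-- `u*(β) = sup{v ≤ -E_∞ : β(v) < β}`. -/
noncomputable def uStar (p : ℕ) (β : ℝ) : ℝ :=
  sSup {v : ℝ | v ≤ -(Einf p) ∧ betaFn p v < β}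

lemma my_Einf_pos (p : ℕ) (hp : 3 ≤ p) : 0 < Einf p := by
  have hP : (3:ℝ) ≤ (p:ℝ) := by exact_mod_cast hp
  have : (0:ℝ) < ((p:ℝ) - 1) / p := by
    apply div_pos <;> linarith
  unfold Einf
  have := Real.sqrt_pos.mpr this
  linarith

lemma my_sqrtD_lt {E v : ℝ} (hE : 0 < E) (hv : v ≤ -E) :
    Real.sqrt (v ^ 2 - E ^ 2) < -v := by
  have h2 : 0 < -v := by linarith
  exact (Real.sqrt_lt' h2).mpr (by nlinarith)

lemma my_sq_sqrtD {E v : ℝ} (hE : 0 < E) (hv : v ≤ -E) :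
    (Real.sqrt (v ^ 2 - E ^ 2)) ^ 2 = v ^ 2 - E ^ 2 := by
  apply Real.sq_sqrt
  nlinarith

lemma my_C_pos (p : ℕ) (hp : 3 ≤ p) :
    0 < ((p : ℝ) / ((2 : ℝ) ^ ((3 : ℝ) / 2) * ((p : ℝ) - 1)))
      * (((p : ℝ) / ((p : ℝ) - 2)) ^ (((p : ℝ) - 2) / 2)) := by
  have hP : (3:ℝ) ≤ (p:ℝ) := by exact_mod_cast hp
  have h1 : (0:ℝ) < (p:ℝ) := by linarith
  have h2 : (0:ℝ) < (p:ℝ) - 1 := by linarith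
  have h3 : (0:ℝ) < (p:ℝ) - 2 := by linarith
  have h4 : (0:ℝ) < (2 : ℝ) ^ ((3 : ℝ) / 2) := Real.rpow_pos_of_pos (by norm_num) _
  exact mul_pos (div_pos h1 (mul_pos h4 h2)) (Real.rpow_pos_of_pos (div_pos h1 h3) _)

lemma my_strictMono (p : ℕ) (hp : 3 ≤ p) :
    StrictMonoOn (betaFn p) (Set.Iic (-(Einf p))) := by
  have hE := my_Einf_pos p hp
  set E := Einf p
  intro v hv w hw hvw
  simp only [Set.mem_Iic] at hv hw
  unfold betaFn
  apply mul_lt_mul_of_pos_left _ (my_C_pos p hp)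
  set a := Real.sqrt (v ^ 2 - E ^ 2) with ha
  set b := Real.sqrt (w ^ 2 - E ^ 2) with hb
  have ha2 : a ^ 2 = v ^ 2 - E ^ 2 := my_sq_sqrtD hE hv
  have hb2 : b ^ 2 = w ^ 2 - E ^ 2 := my_sq_sqrtD hE hw
  have ha0 : 0 ≤ a := Real.sqrt_nonneg _
  have hb0 : 0 ≤ b := Real.sqrt_nonneg _
  have halt : a < -v := my_sqrtD_lt hE hv
  have hblt : b < -w := my_sqrtD_lt hE hw
  have hapos : 0 < a := by
    rw [ha]
    apply Real.sqrt_pos.mpr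
    nlinarith
  have hab : 0 < a + b := by linarith
  have e1 : (a - b) * (a + b) = v ^ 2 - w ^ 2 := by
    have : (a - b) * (a + b) = a ^ 2 - b ^ 2 := by ring
    rw [this, ha2, hb2]; ring
  have e2 : (w - v) * (a + b) < v ^ 2 - w ^ 2 := by
    have hpos : 0 < ((-v) + (-w)) - (a + b) := by linarith
    have := mul_pos (sub_pos.mpr hvw) hpos
    nlinarith
  have : (w - v) * (a + b) < (a - b) * (a + b) := by rw [e1]; exact e2
  have := lt_of_mul_lt_mul_right this hab.le
  linarith

lemma my_continuous (p : ℕ) : Continuous (betaFn p) := by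
  unfold betaFn
  continuity

lemma my_tendsto (p : ℕ) (hp : 3 ≤ p) :
    Tendsto (betaFn p) atBot (nhds 0) := by
  have hE := my_Einf_pos p hp
  set E := Einf p
  have key : Tendsto (fun v : ℝ => -v - Real.sqrt (v ^ 2 - E ^ 2)) atBot (nhds 0) := by
    apply tendsto_of_tendsto_of_tendsto_of_le_of_le'
      (tendsto_const_nhds) (Tendsto.div_atTop (tendsto_const_nhds (x := E ^ 2))
        (tendsto_neg_atBot_atTop))
    · filter_upwards [eventually_le_atBot (-E)] with v hv
      have := my_sqrtD_lt hE hv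
      linarith
    · filter_upwards [eventually_le_atBot (-E)] with v hv
      have hs := my_sq_sqrtD hE hv
      have h0 : 0 ≤ Real.sqrt (v ^ 2 - E ^ 2) := Real.sqrt_nonneg _
      have hlt := my_sqrtD_lt hE hv
      have hvneg : 0 < -v := by linarith
      rw [le_div_iff₀ hvneg]
      nlinarith
  have : Tendsto (betaFn p) atBot
      (nhds (((p : ℝ) / ((2 : ℝ) ^ ((3 : ℝ) / 2) * ((p : ℝ) - 1)))
        * (((p : ℝ) / ((p : ℝ) - 2)) ^ (((p : ℝ) - 2) / 2)) * 0)) := by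
    exact key.const_mul _
  simpa using this

lemma my_key (p : ℕ) (hp : 3 ≤ p) :
    (((p : ℝ) / ((2 : ℝ) ^ ((3 : ℝ) / 2) * ((p : ℝ) - 1)))
      * (((p : ℝ) / ((p : ℝ) - 2)) ^ (((p : ℝ) - 2) / 2)))
    * ((2 / (p : ℝ)) * (((p : ℝ) - 2) / p) ^ (((p : ℝ) - 2) / 2))
    * (Real.sqrt 2 * ((p : ℝ) - 1)) = 1 := by
  have hP : (3:ℝ) ≤ (p:ℝ) := by exact_mod_cast hp
  have h1 : (0:ℝ) < (p:ℝ) := by linarith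
  have h2 : (0:ℝ) < (p:ℝ) - 1 := by linarith
  have h3 : (0:ℝ) < (p:ℝ) - 2 := by linarith
  have hs2 : (0:ℝ) < Real.sqrt 2 := Real.sqrt_pos.mpr (by norm_num)
  have hr : ((p:ℝ) / ((p:ℝ) - 2)) ^ (((p:ℝ) - 2) / 2)
      * (((p:ℝ) - 2) / p) ^ (((p:ℝ) - 2) / 2) = 1 := by
    rw [← Real.mul_rpow (by positivity) (by positivity)]
    rw [show (p:ℝ) / ((p:ℝ) - 2) * (((p:ℝ) - 2) / p) = 1 by field_simp]
    exact Real.one_rpow _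
  have h32 : (2:ℝ) ^ ((3:ℝ)/2) = 2 * Real.sqrt 2 := by
    rw [show ((3:ℝ)/2) = 1 + 1/2 by norm_num, Real.rpow_add (by norm_num),
      Real.rpow_one, Real.sqrt_eq_rpow]
  rw [h32]
  set A := ((p:ℝ) / ((p:ℝ) - 2)) ^ (((p:ℝ) - 2) / 2)
  set B := (((p:ℝ) - 2) / p) ^ (((p:ℝ) - 2) / 2)
  field_simp
  linear_combination hr
lemma my_cond_iff (p : ℕ) (hp : 3 ≤ p) (β : ℝ) (hβ : 0 < β) (h : ℝ)
    (hh : h < -(Einf p)) :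
    ((1 / (Real.sqrt 2 * β * ((p : ℝ) - 1)))
        * (-h - Real.sqrt (h ^ 2 - (Einf p) ^ 2))
        < (2 / (p : ℝ)) * (((p : ℝ) - 2) / p) ^ (((p : ℝ) - 2) / 2))
      ↔ betaFn p h < β := by
  have hE := my_Einf_pos p hp
  have hP : (3:ℝ) ≤ (p:ℝ) := by exact_mod_cast hp
  have h2 : (0:ℝ) < (p:ℝ) - 1 := by linarith
  have hs2 : (0:ℝ) < Real.sqrt 2 := Real.sqrt_pos.mpr (by norm_num)
  have hC := my_C_pos p hp
  have hkey := my_key p hp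
  set C := ((p : ℝ) / ((2 : ℝ) ^ ((3 : ℝ) / 2) * ((p : ℝ) - 1)))
      * (((p : ℝ) / ((p : ℝ) - 2)) ^ (((p : ℝ) - 2) / 2)) with hCdef
  set R := (2 / (p : ℝ)) * (((p : ℝ) - 2) / p) ^ (((p : ℝ) - 2) / 2) with hRdef
  set x := -h - Real.sqrt (h ^ 2 - (Einf p) ^ 2) with hxdef
  have hbeta : betaFn p h = C * x := rfl
  have hd : (0:ℝ) < Real.sqrt 2 * β * ((p:ℝ) - 1) := by positivity
  have hiff1 : (1 / (Real.sqrt 2 * β * ((p : ℝ) - 1))) * x < R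
      ↔ x < R * (Real.sqrt 2 * β * ((p:ℝ) - 1)) := by
    rw [show (1 / (Real.sqrt 2 * β * ((p : ℝ) - 1))) * x
        = x / (Real.sqrt 2 * β * ((p:ℝ) - 1)) by ring]
    exact div_lt_iff₀ hd
  have hiff2 : betaFn p h < β ↔ x < β / C := by
    rw [hbeta, mul_comm]
    exact (lt_div_iff₀ hC).symm
  have heq : R * (Real.sqrt 2 * β * ((p:ℝ) - 1)) = β / C := by
    rw [eq_div_iff (ne_of_gt hC)]
    linear_combination β * hkey
  rw [hiff1, hiff2, heq]

theorem stmt15 (p : ℕ) (hp : 3 ≤ p) (β : ℝ) (hβ : 0 < β) :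
    (∀ h : ℝ, h < -(Einf p) →
      ((∃ s ∈ ({1, -1} : Set ℝ),
          0 < (1 / (Real.sqrt 2 * β * ((p : ℝ) - 1))) * (-h + s * Real.sqrt (h ^ 2 - (Einf p) ^ 2)) ∧
          (1 / (Real.sqrt 2 * β * ((p : ℝ) - 1))) * (-h + s * Real.sqrt (h ^ 2 - (Einf p) ^ 2))
            < (2 / (p : ℝ)) * (((p : ℝ) - 2) / p) ^ (((p : ℝ) - 2) / 2))
        ↔ h < uStar p β)) ∧
    StrictMonoOn (betaFn p) (Set.Iic (-(Einf p))) ∧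
    Tendsto (betaFn p) atBot (nhds 0) := by
  have hE := my_Einf_pos p hp
  have hP : (3:ℝ) ≤ (p:ℝ) := by exact_mod_cast hp
  have hsm := my_strictMono p hp
  have htd := my_tendsto p hp
  refine ⟨?_, hsm, htd⟩
  set S := {v : ℝ | v ≤ -(Einf p) ∧ betaFn p v < β} with hSdef
  have hbdd : BddAbove S := ⟨-(Einf p), fun v hv => hv.1⟩
  have hne : S.Nonempty := by
    have h1 : ∀ᶠ v in atBot, betaFn p v < β := htd.eventually_lt_const hβ
    have h2 : ∀ᶠ v in atBot, v ≤ -(Einf p) := eventually_le_atBot _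
    obtain ⟨v, hv2, hv1⟩ := (h2.and h1).exists
    exact ⟨v, hv2, hv1⟩
  intro h hh
  have hd : (0:ℝ) < Real.sqrt 2 * β * ((p:ℝ) - 1) := by
    have : (0:ℝ) < Real.sqrt 2 := Real.sqrt_pos.mpr (by norm_num)
    have : (0:ℝ) < (p:ℝ) - 1 := by linarith
    positivity
  have hsq0 : 0 ≤ Real.sqrt (h ^ 2 - (Einf p) ^ 2) := Real.sqrt_nonneg _
  have hsqlt : Real.sqrt (h ^ 2 - (Einf p) ^ 2) < -h := my_sqrtD_lt hE hh.le
  constructor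
  · rintro ⟨s, hs, hpos, hlt⟩
    have hxle : -h - Real.sqrt (h ^ 2 - (Einf p) ^ 2)
        ≤ -h + s * Real.sqrt (h ^ 2 - (Einf p) ^ 2) := by
      simp only [Set.mem_insert_iff, Set.mem_singleton_iff] at hs
      rcases hs with rfl | rfl <;> nlinarith
    have hlt2 : (1 / (Real.sqrt 2 * β * ((p : ℝ) - 1)))
        * (-h - Real.sqrt (h ^ 2 - (Einf p) ^ 2))
        < (2 / (p : ℝ)) * (((p : ℝ) - 2) / p) ^ (((p : ℝ) - 2) / 2) := by
      calc (1 / (Real.sqrt 2 * β * ((p : ℝ) - 1)))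
            * (-h - Real.sqrt (h ^ 2 - (Einf p) ^ 2))
          ≤ (1 / (Real.sqrt 2 * β * ((p : ℝ) - 1)))
            * (-h + s * Real.sqrt (h ^ 2 - (Einf p) ^ 2)) := by
            apply mul_le_mul_of_nonneg_left hxle
            positivity
        _ < _ := hlt
    have hbh : betaFn p h < β := (my_cond_iff p hp β hβ h hh).mp hlt2
    -- find v ∈ S with h < v using openness
    have hopen : IsOpen ({v : ℝ | betaFn p v < β} ∩ Iio (-(Einf p))) :=
      (isOpen_lt (my_continuous p) continuous_const).inter isOpen_Iio
    have hmem : h ∈ {v : ℝ | betaFn p v < β} ∩ Iio (-(Einf p)) := ⟨hbh, hh⟩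
    obtain ⟨ε, hε, hball⟩ := Metric.isOpen_iff.mp hopen h hmem
    have hv : h + ε / 2 ∈ {v : ℝ | betaFn p v < β} ∩ Iio (-(Einf p)) := by
      apply hball
      rw [Metric.mem_ball, Real.dist_eq]
      rw [abs_of_pos (by linarith)]
      linarith
    exact lt_csSup_of_lt hbdd ⟨le_of_lt hv.2, hv.1⟩ (by linarith)
  · intro hlt
    obtain ⟨v, hvS, hhv⟩ := exists_lt_of_lt_csSup hne hlt
    have hbh : betaFn p h < β :=
      lt_trans (hsm (Set.mem_Iic.mpr hh.le) (Set.mem_Iic.mpr hvS.1) hhv) hvS.2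
    have hlt2 := (my_cond_iff p hp β hβ h hh).mpr hbh
    refine ⟨-1, by simp, ?_, ?_⟩
    · have : -h + (-1) * Real.sqrt (h ^ 2 - (Einf p) ^ 2)
          = -h - Real.sqrt (h ^ 2 - (Einf p) ^ 2) := by ring
      rw [this]
      apply mul_pos (by positivity)
      linarith
    · have : -h + (-1) * Real.sqrt (h ^ 2 - (Einf p) ^ 2)
          = -h - Real.sqrt (h ^ 2 - (Einf p) ^ 2) := by ring
      rw [this]
      exact hlt2
end
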